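/- Over the complex field, there exists a linear isometric embedding of c₀ into C₀[1, ω²) whose range does SPR, where C₀[1, ω²) = {f ∈ C([1, ω²]) : f(ω²) = 0}. -/

import Mathlib

open scoped ZeroAtInfty

noncomputable section

/-- The pointwise modulus of a continuous function, as a real-valued continuous function. -/
def cmAbs {K : Type*} [TopologicalSpace K] {𝕜 : Type*} [RCLike 𝕜]
    (f : C(K, 𝕜)) : C(K, ℝ) :=
  ⟨fun x => ‖f x‖, (map_continuous f).norm⟩

/-- `inf_{‖λ‖ = 1} ‖f - λ • g‖`. -/
def sprInf {K : Type*} [TopologicalSpace K] [CompactSpace K] {𝕜 : Type*} [RCLike 𝕜]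
    (f g : C(K, 𝕜)) : ℝ :=
  ⨅ l : {c : 𝕜 // ‖c‖ = 1}, ‖f - (l : 𝕜) • g‖

/-- A subspace `E ⊆ C(K, 𝕜)` does `C`-stable phase retrieval. -/
def DoesCSPR {K : Type*} [TopologicalSpace K] [CompactSpace K] {𝕜 : Type*} [RCLike 𝕜]
    (E : Submodule 𝕜 C(K, 𝕜)) (C : ℝ) : Prop :=
  ∀ f ∈ E, ∀ g ∈ E, sprInf f g ≤ C * ‖cmAbs f - cmAbs g‖

/-- A subspace `E ⊆ C(K, 𝕜)` does stable phase retrieval. -/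
def DoesSPR {K : Type*} [TopologicalSpace K] [CompactSpace K] {𝕜 : Type*} [RCLike 𝕜]
    (E : Submodule 𝕜 C(K, 𝕜)) : Prop :=
  ∃ C : ℝ, 1 ≤ C ∧ DoesCSPR E C

/-- Ordinal intervals `[a, b]` (with the order topology of the ordinals) are compact spaces. -/
instance ordIccCompact (a b : Ordinal.{0}) : CompactSpace (Set.Icc a b) :=
  isCompact_iff_compactSpace.mp isCompact_Icc

/-- The point `ω ^ 2` of the ordinal interval `[1, ω ^ 2]`. -/
def omegaSqTop : Set.Icc (1 : Ordinal.{0}) (Ordinal.omega0 ^ (2 : Ordinal.{0})) :=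
  ⟨Ordinal.omega0 ^ (2 : Ordinal.{0}),
    ⟨Order.one_le_iff_pos.mpr (Ordinal.opow_pos _ Ordinal.omega0_pos), le_rfl⟩⟩


/-!
The embedding sends `x ∈ c₀` to the function on `[1, ω²]` with value `x m` at `ω * m + 1`, values
`(x m + x n) / 2` and `(x m + i * x n) / 2` at `ω * m + 2 * j + 2` and `ω * m + 2 * j + 3`, where
`n = m + j + 1`, value `x m / 2` (the limit of these averages as `j → ∞`) at `ω * (m + 1)`, and `0`
at `ω²`. Every value is an average of coordinates and every coordinate occurs, so the map is
isometric. If `‖|Jx| - |Jy|‖ = ε`, then `|x n|`, `|x m + x n|` and `|x m + i * x n|` are within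
`2 ε` of the corresponding quantities for `y`, and polarization makes the Gram products
`x a * conj (x b)` and `y a * conj (y b)` close. Choosing `m` with `‖x‖ ≤ 2 |x m|`, the phase of
`x m * conj (y m)` aligns `y` with `x` up to `28 ε`.
-/

open ComplexConjugate

namespace Complex

theorem abs_normSq_sub_normSq (u v : ℂ) :
    |normSq u - normSq v| = |‖u‖ - ‖v‖| * (‖u‖ + ‖v‖) := by
  rw [normSq_eq_norm_sq, normSq_eq_norm_sq, sq_sub_sq, abs_mul,
    abs_of_nonneg (add_nonneg (norm_nonneg u) (norm_nonneg v)), mul_comm]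

theorem normSq_add_I_mul (a b : ℂ) :
    normSq (a + I * b) = normSq a + normSq b + 2 * (a * conj b).im := by
  rw [normSq_add, normSq_mul, normSq_I, one_mul, map_mul, conj_I]
  simp only [mul_re, mul_im, neg_re, neg_im, I_re, I_im, conj_re, conj_im]
  ring

theorem norm_mul_conj_sub_mul_conj_le (a b a' b' : ℂ) :
    ‖a * conj b - a' * conj b'‖ ≤
      (|normSq (a + b) - normSq (a' + b')| + |normSq (a + I * b) - normSq (a' + I * b')|) / 2 +
        |normSq a - normSq a'| + |normSq b - normSq b'| := by
  have hre : (a * conj b - a' * conj b').re = ((normSq (a + b) - normSq (a' + b'))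
      - (normSq a - normSq a') - (normSq b - normSq b')) / 2 := by
    rw [normSq_add, normSq_add, sub_re]; ring
  have him : (a * conj b - a' * conj b').im = ((normSq (a + I * b) - normSq (a' + I * b'))
      - (normSq a - normSq a') - (normSq b - normSq b')) / 2 := by
    rw [normSq_add_I_mul, normSq_add_I_mul, sub_im]; ring
  have tri : ∀ p q r : ℝ, |(p - q - r) / 2| ≤ (|p| + |q| + |r|) / 2 := fun p q r => by
    rw [abs_div, abs_two]
    linarith [abs_sub (p - q) r, abs_sub p q]
  refine (norm_le_abs_re_add_abs_im _).trans ?_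
  rw [hre, him]
  linarith [tri (normSq (a + b) - normSq (a' + b')) (normSq a - normSq a') (normSq b - normSq b'),
    tri (normSq (a + I * b) - normSq (a' + I * b')) (normSq a - normSq a') (normSq b - normSq b')]

theorem exists_norm_eq_one_forall_norm_mul_norm_sub_le {u v : ℂ} (hu : u ≠ 0) (hv : v ≠ 0) :
    ∃ l : ℂ, ‖l‖ = 1 ∧ ∀ a b : ℂ,
      ‖u‖ * ‖a - l * b‖ ≤ ‖a * conj u - b * conj v‖ + |‖u‖ - ‖v‖| * ‖b‖ := by
  have huv : ‖u‖ * ‖v‖ ≠ 0 := by positivity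
  refine ⟨u * conj v / (‖u‖ * ‖v‖ : ℝ), ?_, fun a b => ?_⟩
  · rw [norm_div, norm_mul, RCLike.norm_conj, norm_real, Real.norm_of_nonneg (by positivity),
      div_self huv]
  · -- `conj u * l * b = (‖u‖ / ‖v‖) * b * conj v`: the error is a Gram term plus a modulus term
    have key : conj u * (a - u * conj v / (‖u‖ * ‖v‖ : ℝ) * b) =
        (a * conj u - b * conj v) + ((‖v‖ - ‖u‖) / ‖v‖ : ℝ) * (b * conj v) := by
      have hu' : conj u * u = (‖u‖ ^ 2 : ℝ) := by rw [mul_comm, mul_conj, normSq_eq_norm_sq]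
      have hu0 : (‖u‖ : ℂ) ≠ 0 := ofReal_ne_zero.mpr (norm_ne_zero_iff.mpr hu)
      have hv0 : (‖v‖ : ℂ) ≠ 0 := ofReal_ne_zero.mpr (norm_ne_zero_iff.mpr hv)
      push_cast at hu' ⊢
      field_simp
      linear_combination (-(b * conj v)) * hu'
    calc ‖u‖ * ‖a - u * conj v / (‖u‖ * ‖v‖ : ℝ) * b‖
        = ‖conj u * (a - u * conj v / (‖u‖ * ‖v‖ : ℝ) * b)‖ := by rw [norm_mul, RCLike.norm_conj]
      _ ≤ ‖a * conj u - b * conj v‖ + |‖u‖ - ‖v‖| * ‖b‖ := by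
        rw [key]
        refine (norm_add_le _ _).trans (le_of_eq ?_)
        rw [norm_mul, norm_real, norm_mul, RCLike.norm_conj, Real.norm_eq_abs, abs_div, abs_norm,
          abs_sub_comm]
        field_simp

end Complex

open Complex

section GramApproximation

variable {ι : Type*} {x y : ι → ℂ} {S ε : ℝ}

theorem norm_add_mul_le_two_mul {z : ι → ℂ} {T : ℝ} (hz : ∀ n, ‖z n‖ ≤ T) {c : ℂ} (hc : ‖c‖ = 1)
    (a b : ι) : ‖z a + c * z b‖ ≤ 2 * T := by
  have := norm_add_le (z a) (c * z b)
  rw [norm_mul, hc, one_mul] at this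
  linarith [hz a, hz b]

theorem norm_mul_conj_sub_mul_conj_le_of_abs_norm_sub_le [LinearOrder ι] (hS : ∀ n, ‖x n‖ ≤ S)
    (h1 : ∀ n, |‖x n‖ - ‖y n‖| ≤ ε)
    (h2 : ∀ a b, a < b → |‖x a + x b‖ - ‖y a + y b‖| ≤ 2 * ε)
    (h3 : ∀ a b, a < b → |‖x a + I * x b‖ - ‖y a + I * y b‖| ≤ 2 * ε) (a b : ι) :
    ‖x a * conj (x b) - y a * conj (y b)‖ ≤ 12 * ε * (S + ε) := by
  have hε : 0 ≤ ε := (abs_nonneg _).trans (h1 a)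
  have hxB : ∀ n, ‖x n‖ ≤ S + ε := fun n => (hS n).trans (le_add_of_nonneg_right hε)
  have hyB : ∀ n, ‖y n‖ ≤ S + ε := fun n => by linarith [abs_le.mp (h1 n), hS n]
  have hB : 0 ≤ S + ε := (norm_nonneg _).trans (hxB a)
  have hsq : ∀ n, |normSq (x n) - normSq (y n)| ≤ ε * (2 * (S + ε)) := fun n => by
    rw [abs_normSq_sub_normSq]
    exact mul_le_mul (h1 n) (by linarith [hxB n, hyB n]) (by positivity) hε
  have hsq2 : ∀ a b, ∀ c : ℂ, ‖c‖ = 1 → |‖x a + c * x b‖ - ‖y a + c * y b‖| ≤ 2 * ε →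
      |normSq (x a + c * x b) - normSq (y a + c * y b)| ≤ 2 * ε * (4 * (S + ε)) :=
    fun a b c hc h => by
      rw [abs_normSq_sub_normSq]
      refine mul_le_mul h ?_ (by positivity) (by positivity)
      linarith [norm_add_mul_le_two_mul hxB hc a b, norm_add_mul_le_two_mul hyB hc a b]
  have hlt : ∀ a b, a < b → ‖x a * conj (x b) - y a * conj (y b)‖ ≤ 12 * ε * (S + ε) :=
    fun a b hab => by
      have := norm_mul_conj_sub_mul_conj_le (x a) (x b) (y a) (y b)
      have hre := hsq2 a b 1 norm_one (by simpa using h2 a b hab)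
      have him := hsq2 a b I norm_I (h3 a b hab)
      simp only [one_mul] at hre
      linarith [hsq a, hsq b]
  rcases lt_trichotomy a b with hab | rfl | hab
  · exact hlt a b hab
  · rw [mul_conj, mul_conj, ← ofReal_sub, norm_real, Real.norm_eq_abs]
    linarith [hsq a, mul_nonneg hε hB]
  · rw [← norm_conj, map_sub, map_mul, map_mul, conj_conj, conj_conj, mul_comm (conj (x a)),
      mul_comm (conj (y a))]
    exact hlt b a hab

theorem exists_norm_eq_one_forall_norm_sub_mul_le [LinearOrder ι] {m : ι}
    (hS : ∀ n, ‖x n‖ ≤ S) (hm : S ≤ 2 * ‖x m‖)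
    (h1 : ∀ n, |‖x n‖ - ‖y n‖| ≤ ε)
    (h2 : ∀ a b, a < b → |‖x a + x b‖ - ‖y a + y b‖| ≤ 2 * ε)
    (h3 : ∀ a b, a < b → |‖x a + I * x b‖ - ‖y a + I * y b‖| ≤ 2 * ε) :
    ∃ l : ℂ, ‖l‖ = 1 ∧ ∀ n, ‖x n - l * y n‖ ≤ 28 * ε := by
  have hε : 0 ≤ ε := (abs_nonneg _).trans (h1 m)
  have hy : ∀ n, ‖y n‖ ≤ S + ε := fun n => by linarith [abs_le.mp (h1 n), hS n]
  by_cases hsmall : S ≤ 13 * ε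
  · refine ⟨1, norm_one, fun n => ?_⟩
    rw [one_mul]
    linarith [norm_sub_le (x n) (y n), hS n, hy n]
  have hxm : 0 < ‖x m‖ := by linarith
  have hym : 0 < ‖y m‖ := by linarith [abs_le.mp (h1 m)]
  obtain ⟨l, hl, hphase⟩ := exists_norm_eq_one_forall_norm_mul_norm_sub_le (norm_pos_iff.mp hxm)
    (norm_pos_iff.mp hym)
  refine ⟨l, hl, fun n => ?_⟩
  have hgram := norm_mul_conj_sub_mul_conj_le_of_abs_norm_sub_le hS h1 h2 h3 n m
  have hmod : |‖x m‖ - ‖y m‖| * ‖y n‖ ≤ ε * (S + ε) :=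
    mul_le_mul (h1 m) (hy n) (norm_nonneg _) hε
  have := hphase (x n) (y n)
  nlinarith [norm_nonneg (x n - l * y n)]

end GramApproximation

open Filter Topology Set

namespace Ordinal

theorem omega0_opow_two : ω ^ (2 : Ordinal) = ω * ω := by
  rw [← Nat.cast_ofNat, opow_natCast, pow_two]

theorem omega0_mul_add_lt_omega0_mul_succ (m k : ℕ) : ω * m + k < ω * (m + 1 : ℕ) := by
  rw [Nat.cast_succ, mul_add_one]
  exact add_lt_add_right (natCast_lt_omega0 k) _

theorem omega0_mul_add_lt_omega0_mul_omega0 (m k : ℕ) : ω * m + k < ω * ω :=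
  (omega0_mul_add_lt_omega0_mul_succ m k).trans_le
    (mul_le_mul_right (natCast_lt_omega0 _).le _)

theorem omega0_mul_add_lt_omega0_mul_add_iff {m n k l : ℕ} :
    ω * m + k < ω * n + l ↔ m < n ∨ m = n ∧ k < l := by
  have lex : ∀ {m n k l : ℕ}, m < n ∨ m = n ∧ k < l → ω * m + k < ω * n + l := by
    rintro m n k l (h | ⟨rfl, h⟩)
    · calc ω * m + k < ω * (m + 1 : ℕ) := omega0_mul_add_lt_omega0_mul_succ m k
        _ ≤ ω * n := mul_le_mul_right (Nat.cast_le.mpr h) _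
        _ ≤ ω * n + l := le_self_add
    · exact add_lt_add_right (Nat.cast_lt.mpr h) _
  refine ⟨fun h => ?_, lex⟩
  by_contra hne
  rcases (by omega : (n < m ∨ n = m ∧ l < k) ∨ n = m ∧ l = k) with h' | ⟨rfl, rfl⟩
  · exact lt_asymm h (lex h')
  · exact h.false

theorem omega0_mul_add_injective : Function.Injective fun p : ℕ × ℕ => ω * p.1 + p.2 := by
  rintro ⟨m, k⟩ ⟨n, l⟩ h
  have h₁ := omega0_mul_add_lt_omega0_mul_add_iff.not.mp (h : ω * m + k = ω * n + l).not_lt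
  have h₂ := omega0_mul_add_lt_omega0_mul_add_iff.not.mp h.not_gt
  simp only [Prod.mk.injEq]
  omega

theorem exists_eq_omega0_mul_add_of_lt {β : Ordinal} (h : β < ω * ω) :
    ∃ m k : ℕ, β = ω * m + k := by
  obtain ⟨m, hm⟩ := lt_omega0.mp ((lt_mul_iff_div_lt omega0_ne_zero).mp h)
  obtain ⟨k, hk⟩ := lt_omega0.mp (mod_lt β omega0_ne_zero)
  exact ⟨m, k, by rw [← div_add_mod β ω, hm, hk]⟩

end Ordinal

theorem SuccOrder.continuous_of_forall_isSuccLimit {α β : Type*} [LinearOrder α]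
    [TopologicalSpace α] [OrderTopology α] [SuccOrder α] [NoMaxOrder α] [PseudoMetricSpace β]
    {f : α → β}
    (h : ∀ a, Order.IsSuccLimit a → ∀ ε > 0, ∃ l < a, ∀ b ∈ Ioc l a, dist (f b) (f a) < ε) :
    Continuous f := by
  refine continuous_iff_continuousAt.mpr fun a => ?_
  by_cases ha : Order.IsSuccLimit a
  · exact ((SuccOrder.hasBasis_nhds_Ioc_of_exists_lt (not_isMin_iff.mp ha.not_isMin)).tendsto_iff
      Metric.nhds_basis_ball).mpr (h a ha)
  · rw [ContinuousAt, SuccOrder.nhds_eq_pure.mpr ha]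
    exact tendsto_pure_nhds f a

namespace ZeroAtInftyContinuousMap

variable {α β : Type*} [TopologicalSpace α] [SeminormedAddCommGroup β]

theorem norm_apply_le (f : C₀(α, β)) (a : α) : ‖f a‖ ≤ ‖f‖ := by
  rw [← norm_toBCF_eq_norm]
  exact f.toBCF.norm_coe_le_norm a

theorem norm_le_of_forall {f : C₀(α, β)} {C : ℝ} (hC : 0 ≤ C) (h : ∀ a, ‖f a‖ ≤ C) : ‖f‖ ≤ C := by
  rw [← norm_toBCF_eq_norm]
  exact (BoundedContinuousFunction.norm_le hC).mpr h

theorem exists_norm_le_two_mul_norm_apply [Nonempty α] (f : C₀(α, β)) :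
    ∃ a, ‖f‖ ≤ 2 * ‖f a‖ := by
  by_contra! h
  have h₀ := h (Classical.arbitrary α)
  have := norm_le_of_forall (f := f) (C := ‖f‖ / 2) (by positivity) fun a => by linarith [h a]
  linarith [norm_nonneg (f (Classical.arbitrary α))]

theorem tendsto_atTop_nat (f : C₀(ℕ, β)) : Tendsto f atTop (𝓝 0) := by
  simpa [cocompact_eq_cofinite, Nat.cofinite_eq_atTop] using zero_at_infty f

end ZeroAtInftyContinuousMap

theorem abs_norm_sub_norm_le_norm_cmAbs_sub {K : Type*} [TopologicalSpace K] [CompactSpace K]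
    {𝕜 : Type*} [RCLike 𝕜] (f g : C(K, 𝕜)) (p : K) :
    |‖f p‖ - ‖g p‖| ≤ ‖cmAbs f - cmAbs g‖ :=
  (cmAbs f - cmAbs g).norm_coe_le_norm p

theorem sprInf_le {K : Type*} [TopologicalSpace K] [CompactSpace K] {𝕜 : Type*} [RCLike 𝕜]
    (f g : C(K, 𝕜)) {l : 𝕜} (hl : ‖l‖ = 1) : sprInf f g ≤ ‖f - l • g‖ :=
  ciInf_le ⟨0, by rintro _ ⟨_, rfl⟩; exact norm_nonneg _⟩ (⟨l, hl⟩ : {c : 𝕜 // ‖c‖ = 1})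

open scoped Ordinal

namespace PhaseRetrieval

def phase (k : ℕ) : ℂ := if Even k then 1 else I

theorem norm_phase (k : ℕ) : ‖phase k‖ = 1 := by
  unfold phase; split_ifs <;> simp

def pairFunctional : ℕ × ℕ → (ℕ → ℂ) →ₗ[ℂ] ℂ
  | (0, 0) => 0
  | (m + 1, 0) => (2⁻¹ : ℂ) • LinearMap.proj m
  | (m, 1) => LinearMap.proj m
  | (m, k + 2) => (2⁻¹ : ℂ) • (LinearMap.proj m + phase k • LinearMap.proj (m + k / 2 + 1))

def ordinalFunctional (β : Ordinal.{0}) : (ℕ → ℂ) →ₗ[ℂ] ℂ :=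
  Function.extend (fun p : ℕ × ℕ => ω * p.1 + p.2) pairFunctional 0 β

theorem ordinalFunctional_omega0_mul_add (m k : ℕ) :
    ordinalFunctional (ω * m + k) = pairFunctional (m, k) :=
  Ordinal.omega0_mul_add_injective.extend_apply _ _ (m, k)

theorem ordinalFunctional_of_omega0_mul_omega0_le {β : Ordinal.{0}} (hβ : ω * ω ≤ β) :
    ordinalFunctional β = 0 := by
  refine Function.extend_apply' _ _ _ ?_
  rintro ⟨⟨m, k⟩, rfl⟩
  exact (Ordinal.omega0_mul_add_lt_omega0_mul_omega0 m k).not_ge hβ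

section pairFunctional

variable (x : ℕ → ℂ) (m : ℕ)

theorem pairFunctional_succ_zero : pairFunctional (m + 1, 0) x = x m / 2 := by
  simp only [pairFunctional, LinearMap.smul_apply, LinearMap.proj_apply, smul_eq_mul]
  ring

theorem pairFunctional_one : pairFunctional (m, 1) x = x m := by
  cases m <;> rfl

theorem pairFunctional_add_two (k : ℕ) :
    pairFunctional (m, k + 2) x = (x m + phase k * x (m + k / 2 + 1)) / 2 := by
  rcases m with _ | m <;>
  · simp only [pairFunctional, LinearMap.smul_apply, LinearMap.add_apply, LinearMap.proj_apply,
      smul_eq_mul]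
    ring

theorem pairFunctional_even (j : ℕ) :
    pairFunctional (m, 2 * j + 2) x = (x m + x (m + j + 1)) / 2 := by
  simp [pairFunctional_add_two, phase, Nat.mul_div_cancel_left j two_pos]

theorem pairFunctional_odd (j : ℕ) :
    pairFunctional (m, 2 * j + 3) x = (x m + I * x (m + j + 1)) / 2 := by
  have : (2 * j + 1) / 2 = j := by omega
  simp [pairFunctional_add_two, phase, this]

theorem norm_pairFunctional_le {C : ℝ} (hC : 0 ≤ C) (k : ℕ) (hx : ∀ n, m ≤ n + 1 → ‖x n‖ ≤ C) :
    ‖pairFunctional (m, k) x‖ ≤ C := by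
  rcases k with _ | _ | k
  · rcases m with _ | m
    · simpa [pairFunctional] using hC
    · rw [pairFunctional_succ_zero, norm_div, RCLike.norm_ofNat]
      linarith [hx m le_rfl, norm_nonneg (x m)]
  · exact pairFunctional_one x m ▸ hx m (by omega)
  · have := norm_add_le (x m) (phase k * x (m + k / 2 + 1))
    rw [norm_mul, norm_phase, one_mul] at this
    rw [pairFunctional_add_two, norm_div, RCLike.norm_ofNat]
    linarith [hx m (by omega), hx (m + k / 2 + 1) (by omega)]

theorem norm_pairFunctional_sub_limit (k : ℕ) :
    ‖pairFunctional (m, k + 2) x - pairFunctional (m + 1, 0) x‖ = ‖x (m + k / 2 + 1)‖ / 2 := by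
  rw [pairFunctional_add_two, pairFunctional_succ_zero, add_div, add_sub_cancel_left, norm_div,
    norm_mul, norm_phase, one_mul, RCLike.norm_ofNat]

end pairFunctional

section continuity

open Ordinal

variable {x : ℕ → ℂ} {N : ℕ} {ε : ℝ}

theorem exists_Ioc_dist_ordinalFunctional_lt_of_omega0_mul_omega0_le (hε : 0 < ε)
    (hN : ∀ n ≥ N, ‖x n‖ ≤ ε / 2) {β : Ordinal.{0}} (hβ : ω * ω ≤ β) :
    ∃ l < β, ∀ q ∈ Ioc l β, dist (ordinalFunctional q x) (ordinalFunctional β x) < ε := by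
  refine ⟨ω * ↑(N + 1) + ↑(0 : ℕ), (omega0_mul_add_lt_omega0_mul_omega0 _ _).trans_le hβ,
    fun q hq => ?_⟩
  rw [ordinalFunctional_of_omega0_mul_omega0_le hβ, LinearMap.zero_apply, dist_zero_right]
  rcases lt_or_ge q (ω * ω) with hq' | hq'
  · obtain ⟨a, b, rfl⟩ := exists_eq_omega0_mul_add_of_lt hq'
    have ha := omega0_mul_add_lt_omega0_mul_add_iff.mp hq.1
    rw [ordinalFunctional_omega0_mul_add]
    refine (norm_pairFunctional_le x a (by linarith) b fun n hn => hN n (by omega)).trans_lt ?_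
    linarith
  · simpa [ordinalFunctional_of_omega0_mul_omega0_le hq'] using hε

theorem exists_Ioc_dist_ordinalFunctional_lt_omega0_mul_succ (hε : 0 < ε)
    (hN : ∀ n ≥ N, ‖x n‖ ≤ ε / 2) (m : ℕ) :
    ∃ l < ω * ↑(m + 1) + ↑(0 : ℕ), ∀ q ∈ Ioc l (ω * ↑(m + 1) + ↑(0 : ℕ)),
      dist (ordinalFunctional q x) (ordinalFunctional (ω * ↑(m + 1) + ↑(0 : ℕ)) x) < ε := by
  refine ⟨ω * m + ↑(2 * N + 2), omega0_mul_add_lt_omega0_mul_add_iff.mpr (Or.inl (by omega)),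
    fun q hq => ?_⟩
  obtain ⟨a, b, rfl⟩ := exists_eq_omega0_mul_add_of_lt
    (hq.2.trans_lt (omega0_mul_add_lt_omega0_mul_omega0 _ _))
  have h₁ := omega0_mul_add_lt_omega0_mul_add_iff.mp hq.1
  have h₂ := omega0_mul_add_lt_omega0_mul_add_iff.not.mp hq.2.not_gt
  rcases (by omega : a = m + 1 ∧ b = 0 ∨ a = m ∧ 2 * N + 2 < b) with ⟨rfl, rfl⟩ | ⟨rfl, hb⟩
  · simpa using hε
  · obtain ⟨k, rfl⟩ : ∃ k, b = k + 2 := ⟨b - 2, by omega⟩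
    rw [ordinalFunctional_omega0_mul_add, ordinalFunctional_omega0_mul_add, dist_eq_norm,
      norm_pairFunctional_sub_limit]
    linarith [hN (a + k / 2 + 1) (by omega)]

theorem norm_ordinalFunctional_le {C : ℝ} (hC : 0 ≤ C) (hx : ∀ n, ‖x n‖ ≤ C) (β : Ordinal.{0}) :
    ‖ordinalFunctional β x‖ ≤ C := by
  rcases lt_or_ge β (ω * ω) with hβ | hβ
  · obtain ⟨m, k, rfl⟩ := exists_eq_omega0_mul_add_of_lt hβ
    rw [ordinalFunctional_omega0_mul_add]
    exact norm_pairFunctional_le x m hC k fun n _ => hx n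
  · simpa [ordinalFunctional_of_omega0_mul_omega0_le hβ] using hC

theorem continuous_ordinalFunctional (hx : Tendsto x atTop (𝓝 0)) :
    Continuous fun β => ordinalFunctional β x := by
  refine SuccOrder.continuous_of_forall_isSuccLimit fun β hβ ε hε => ?_
  obtain ⟨N, hN⟩ : ∃ N, ∀ n ≥ N, ‖x n‖ ≤ ε / 2 := eventually_atTop.mp
    ((tendsto_zero_iff_norm_tendsto_zero.mp hx).eventually (ge_mem_nhds (half_pos hε)))
  rcases lt_or_ge β (ω * ω) with hlt | hge
  · obtain ⟨m, k, rfl⟩ := exists_eq_omega0_mul_add_of_lt hlt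
    rcases k with _ | k
    · rcases m with _ | m
      · simp at hβ
      · exact exists_Ioc_dist_ordinalFunctional_lt_omega0_mul_succ hε hN m
    · rw [Nat.cast_succ, ← add_assoc, ← Order.succ_eq_add_one] at hβ
      exact absurd hβ (Order.not_isSuccLimit_succ _)
  · exact exists_Ioc_dist_ordinalFunctional_lt_of_omega0_mul_omega0_le hε hN hge

end continuity

theorem omega0_mul_add_mem_Icc (m k : ℕ) (hk : k ≠ 0) :
    ω * m + k ∈ Icc (1 : Ordinal.{0}) (ω ^ (2 : Ordinal.{0})) :=
  ⟨le_add_left (Nat.one_le_cast.mpr (Nat.one_le_iff_ne_zero.mpr hk)),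
    Ordinal.omega0_opow_two ▸ (Ordinal.omega0_mul_add_lt_omega0_mul_omega0 m k).le⟩

def omegaSqEmbedding :
    C₀(ℕ, ℂ) →ₗᵢ[ℂ] C(Icc (1 : Ordinal.{0}) (ω ^ (2 : Ordinal.{0})), ℂ) where
  toFun x := ⟨fun p => ordinalFunctional p x,
    (continuous_ordinalFunctional x.tendsto_atTop_nat).comp continuous_subtype_val⟩
  map_add' x y := by ext; simp
  map_smul' c x := by ext; simp
  norm_map' x := by
    refine le_antisymm ((ContinuousMap.norm_le _ (norm_nonneg x)).mpr fun p => ?_)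
      (ZeroAtInftyContinuousMap.norm_le_of_forall (norm_nonneg _) fun n => ?_)
    · exact norm_ordinalFunctional_le (norm_nonneg x) x.norm_apply_le p
    · refine le_of_eq_of_le ?_ (ContinuousMap.norm_coe_le_norm _
        ⟨_, omega0_mul_add_mem_Icc n 1 one_ne_zero⟩)
      change ‖x n‖ = ‖ordinalFunctional (ω * n + (1 : ℕ)) x‖
      rw [ordinalFunctional_omega0_mul_add, pairFunctional_one]

theorem omegaSqEmbedding_apply (x : C₀(ℕ, ℂ)) (p : Icc (1 : Ordinal.{0}) (ω ^ (2 : Ordinal.{0}))) :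
    omegaSqEmbedding x p = ordinalFunctional p x := rfl

theorem omegaSqEmbedding_apply_omegaSqTop (x : C₀(ℕ, ℂ)) : omegaSqEmbedding x omegaSqTop = 0 := by
  rw [omegaSqEmbedding_apply, ordinalFunctional_of_omega0_mul_omega0_le
    (Ordinal.omega0_opow_two ▸ le_rfl), LinearMap.zero_apply]

theorem abs_norm_pairFunctional_sub_le (x y : C₀(ℕ, ℂ)) (m : ℕ) {k : ℕ} (hk : k ≠ 0) :
    |‖pairFunctional (m, k) x‖ - ‖pairFunctional (m, k) y‖| ≤
      ‖cmAbs (omegaSqEmbedding x) - cmAbs (omegaSqEmbedding y)‖ := by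
  have := abs_norm_sub_norm_le_norm_cmAbs_sub (omegaSqEmbedding x) (omegaSqEmbedding y)
    ⟨_, omega0_mul_add_mem_Icc m k hk⟩
  rwa [omegaSqEmbedding_apply, omegaSqEmbedding_apply, ordinalFunctional_omega0_mul_add] at this

theorem abs_norm_sub_norm_le_of_abs_norm_div_two_sub {u v : ℂ} {ε : ℝ}
    (h : |‖u / 2‖ - ‖v / 2‖| ≤ ε) : |‖u‖ - ‖v‖| ≤ 2 * ε := by
  rw [norm_div, norm_div, RCLike.norm_ofNat, ← sub_div, abs_div, abs_two] at h
  linarith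

theorem doesCSPR_range_omegaSqEmbedding :
    DoesCSPR (LinearMap.range omegaSqEmbedding.toLinearMap) 28 := by
  rintro _ ⟨x, rfl⟩ _ ⟨y, rfl⟩
  set ε := ‖cmAbs (omegaSqEmbedding x) - cmAbs (omegaSqEmbedding y)‖
  have h1 : ∀ n, |‖x n‖ - ‖y n‖| ≤ ε := fun n => by
    simpa [pairFunctional_one] using abs_norm_pairFunctional_sub_le x y n one_ne_zero
  have h2 : ∀ a b, a < b → |‖x a + x b‖ - ‖y a + y b‖| ≤ 2 * ε := fun a b hab => by
    obtain ⟨j, rfl⟩ : ∃ j, b = a + j + 1 := ⟨b - a - 1, by omega⟩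
    refine abs_norm_sub_norm_le_of_abs_norm_div_two_sub ?_
    simpa [pairFunctional_even] using
      abs_norm_pairFunctional_sub_le x y a (k := 2 * j + 2) (by omega)
  have h3 : ∀ a b, a < b → |‖x a + I * x b‖ - ‖y a + I * y b‖| ≤ 2 * ε := fun a b hab => by
    obtain ⟨j, rfl⟩ : ∃ j, b = a + j + 1 := ⟨b - a - 1, by omega⟩
    refine abs_norm_sub_norm_le_of_abs_norm_div_two_sub ?_
    simpa [pairFunctional_odd] using
      abs_norm_pairFunctional_sub_le x y a (k := 2 * j + 3) (by omega)
  obtain ⟨m, hm⟩ := x.exists_norm_le_two_mul_norm_apply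
  obtain ⟨l, hl, hxy⟩ := exists_norm_eq_one_forall_norm_sub_mul_le x.norm_apply_le hm h1 h2 h3
  calc sprInf (omegaSqEmbedding x) (omegaSqEmbedding y)
      ≤ ‖omegaSqEmbedding x - l • omegaSqEmbedding y‖ := sprInf_le _ _ hl
    _ = ‖x - l • y‖ := by rw [← map_smul, ← map_sub, LinearIsometry.norm_map]
    _ ≤ 28 * ε := (x - l • y).norm_le_of_forall (by positivity) hxy

end PhaseRetrieval

/-- Over the complex field, there is a linear isometric embedding of `c₀` into
`C₀[1, ω²) = {f ∈ C([1, ω²]) : f (ω²) = 0}` whose range does SPR. -/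
theorem c0_SPR_embedding_into_C0_omega_sq :
    ∃ J : C₀(ℕ, ℂ) →ₗᵢ[ℂ]
        C(Set.Icc (1 : Ordinal.{0}) (Ordinal.omega0 ^ (2 : Ordinal.{0})), ℂ),
      (∀ x : C₀(ℕ, ℂ), J x omegaSqTop = 0) ∧
      DoesSPR (LinearMap.range J.toLinearMap) :=
  ⟨PhaseRetrieval.omegaSqEmbedding, PhaseRetrieval.omegaSqEmbedding_apply_omegaSqTop, 28,
    by norm_num, PhaseRetrieval.doesCSPR_range_omegaSqEmbedding⟩
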